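/- The functions F̃(ũ,ṽ) = ũ³ṽ³/1152 and H̃(ũ,ṽ) = −48√3/(ũ²ṽ²), defined for ũ > 0, ṽ > 0, satisfy the natural equation (F̃·F̃_{ũṽ} − F̃_ũ·F̃_ṽ)/F̃ = (ε₁ + ∫_{ṽ₀}^{ṽ} F̃(ũ,s)·H̃_ũ(ũ,s) ds)·(ε₂ + ∫_{ũ₀}^{ũ} F̃(s,ṽ)·H̃_ṽ(s,ṽ) ds) − F̃²H̃² with ε₁ = ε₂ = 1 and initial point (ũ₀, ṽ₀) = (2√2·3^{1/4}, 2√2·3^{1/4}). -/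

import Mathlib

noncomputable def pderivU (f : ℝ → ℝ → ℝ) (u v : ℝ) : ℝ := deriv (fun t => f t v) u
noncomputable def pderivV (f : ℝ → ℝ → ℝ) (u v : ℝ) : ℝ := deriv (fun t => f u t) v
noncomputable def pderivUV (f : ℝ → ℝ → ℝ) (u v : ℝ) : ℝ := pderivV (pderivU f) u v

/-- F̃(ũ,ṽ) = ũ³ṽ³/1152. -/
noncomputable def Ft (u v : ℝ) : ℝ := u^3 * v^3 / 1152

/-- H̃(ũ,ṽ) = −48√3/(ũ²ṽ²). -/
noncomputable def Ht (u v : ℝ) : ℝ := -48 * Real.sqrt 3 / (u^2 * v^2)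

/-- The initial point coordinate ũ₀ = ṽ₀ = 2√2·3^{1/4}. -/
noncomputable def c0 : ℝ := 2 * Real.sqrt 2 * (3 : ℝ)^((1 : ℝ)/4)

/-!
Both sides vanish. F̃ is a product φ(ũ)ψ(ṽ), so F̃·F̃_{ũṽ} = φφ'ψψ' = F̃_ũ·F̃_ṽ.
On the right, F̃(ũ,s)·H̃_ũ(ũ,s) = (√3/12)·s, and since ũ₀² = 8√3 the first factor is
1 + (√3/24)(ṽ² − ũ₀²) = (√3/24)ṽ²; likewise the second is (√3/24)ũ². Their product is
(√3ũṽ/24)² = (F̃H̃)².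
-/

section Separable

variable {F : ℝ → ℝ → ℝ} {f g : ℝ → ℝ}

theorem pderivU_of_eq_mul (hF : ∀ u v, F u v = f u * g v) (u v : ℝ) :
    pderivU F u v = deriv f u * g v := by
  simp only [pderivU, hF, deriv_mul_const_field]

theorem pderivV_of_eq_mul (hF : ∀ u v, F u v = f u * g v) (u v : ℝ) :
    pderivV F u v = f u * deriv g v := by
  simp only [pderivV, hF, deriv_const_mul_field]

theorem pderivUV_of_eq_mul (hF : ∀ u v, F u v = f u * g v) (u v : ℝ) :
    pderivUV F u v = deriv f u * deriv g v :=
  pderivV_of_eq_mul (pderivU_of_eq_mul hF) u v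

theorem mul_pderivUV_sub_pderivU_mul_pderivV_of_eq_mul (hF : ∀ u v, F u v = f u * g v)
    (u v : ℝ) : F u v * pderivUV F u v - pderivU F u v * pderivV F u v = 0 := by
  rw [hF, pderivUV_of_eq_mul hF, pderivU_of_eq_mul hF, pderivV_of_eq_mul hF]
  ring

end Separable

theorem Ft_eq_mul (u v : ℝ) : Ft u v = u ^ 3 / 1152 * v ^ 3 := by
  rw [Ft]; ring

theorem Ht_eq_mul (u v : ℝ) : Ht u v = -48 * √3 * u ^ (-2 : ℤ) * v ^ (-2 : ℤ) := by
  rw [Ht, div_eq_mul_inv, mul_inv, zpow_neg, zpow_neg, zpow_ofNat, zpow_ofNat]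
  ring

theorem pderivU_Ht (u v : ℝ) : pderivU Ht u v = 96 * √3 * u ^ (-3 : ℤ) * v ^ (-2 : ℤ) := by
  rw [pderivU_of_eq_mul Ht_eq_mul, deriv_const_mul_field, deriv_zpow]
  push_cast
  ring

theorem Ft_mul_pderivU_Ht {u : ℝ} (hu : u ≠ 0) (s : ℝ) :
    Ft u s * pderivU Ht u s = √3 / 12 * s := by
  rw [pderivU_Ht, Ft]
  field_simp
  ring

theorem Ft_mul_pderivV_Ht {v : ℝ} (hv : v ≠ 0) (s : ℝ) :
    Ft s v * pderivV Ht s v = √3 / 12 * s := by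
  have hFt : Ft s v = Ft v s := by simp only [Ft]; ring
  have hHt : (fun t => Ht s t) = fun t => Ht t s := by funext t; simp only [Ht]; ring
  rw [hFt, pderivV, hHt, ← pderivU, Ft_mul_pderivU_Ht hv]

theorem Ft_mul_Ht {u v : ℝ} (hu : u ≠ 0) (hv : v ≠ 0) :
    Ft u v * Ht u v = -(√3 / 24 * u * v) := by
  simp only [Ft, Ht]
  field_simp
  ring

theorem c0_sq : c0 ^ 2 = 8 * √3 := by
  rw [c0, mul_pow, mul_pow, Real.sq_sqrt zero_le_two, ← Real.rpow_natCast (3 ^ (1 / 4 : ℝ)) 2,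
    ← Real.rpow_mul zero_le_three, Real.sqrt_eq_rpow]
  norm_num

theorem one_add_integral_from_c0 {h : ℝ → ℝ} (hh : ∀ s, h s = √3 / 12 * s) (x : ℝ) :
    1 + ∫ s in c0..x, h s = √3 / 24 * x ^ 2 := by
  have h3 : √3 * √3 = 3 := Real.mul_self_sqrt zero_le_three
  simp_rw [hh]
  rw [intervalIntegral.integral_const_mul, integral_id, c0_sq]
  linear_combination (-1 / 3 : ℝ) * h3

/-- F̃ and H̃ satisfy the natural equation with ε₁ = ε₂ = 1 and
    initial point (ũ₀, ṽ₀) = (2√2·3^{1/4}, 2√2·3^{1/4}). -/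
theorem stmt13 (u v : ℝ) (hu : 0 < u) (hv : 0 < v) :
    (Ft u v * pderivUV Ft u v - pderivU Ft u v * pderivV Ft u v) / Ft u v =
      (1 + ∫ s in c0..v, Ft u s * pderivU Ht u s) *
      (1 + ∫ s in c0..u, Ft s v * pderivV Ht s v) -
      (Ft u v)^2 * (Ht u v)^2 := by
  rw [mul_pderivUV_sub_pderivU_mul_pderivV_of_eq_mul Ft_eq_mul, zero_div,
    one_add_integral_from_c0 (Ft_mul_pderivU_Ht hu.ne'),
    one_add_integral_from_c0 (Ft_mul_pderivV_Ht hv.ne'), ← mul_pow, Ft_mul_Ht hu.ne' hv.ne']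
  ring
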